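/- arXiv:2007.01175 — 6 statements merged into one kernel-verified Lean document; each statement's English description precedes it below -/
import Mathlib

section
/- For any finitely supported signed measure ω on X, any point x ∈ X, and any n ≥ 1, the lowering identity holds: (ω+δ_x)_n − (ω)_n = n · Sym(δ_x ⊗ (ω)_{n−1}). -/
open Finset

section Defs

variable {X : Type*} [Fintype X] [DecidableEq X]

/-- The falling factorial measure `(ω)_n` on `X^n`, given by the density
`(ω)_n(y₁,…,y_n) = ω(y₁)(ω(y₂)−δ_{y₁}(y₂))⋯(ω(y_n)−δ_{y₁}(y_n)−⋯−δ_{y_{n−1}}(y_n))`. -/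
noncomputable def ff (ω : X → ℝ) : (n : ℕ) → (Fin n → X) → ℝ
  | 0 => fun _ => 1
  | n + 1 => fun y =>
      ff ω n (fun i => y i.castSucc) *
        (ω (y (Fin.last n)) - ∑ i : Fin n, if y i.castSucc = y (Fin.last n) then (1 : ℝ) else 0)

/-- Dirac measure at `x`. -/
noncomputable def diracMeas (x : X) : X → ℝ := fun a => if a = x then 1 else 0

/-- The measure `δ_{x₁}+⋯+δ_{x_k}` of a multiset `[x₁,…,x_k]`. -/
noncomputable def msMeas {k : ℕ} (x : Fin k → X) : X → ℝ :=
  fun a => ((Finset.univ.filter (fun i => x i = a)).card : ℝ)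

/-- Integration `⟨μ, f⟩` of a function against a measure on `X^n`. -/
noncomputable def pairing (n : ℕ) (μ f : (Fin n → X) → ℝ) : ℝ :=
  ∑ y : Fin n → X, μ y * f y

/-- Symmetrization of a function/measure on `X^n`. -/
noncomputable def symmFun (n : ℕ) (μ : (Fin n → X) → ℝ) : (Fin n → X) → ℝ :=
  fun y => (∑ π : Equiv.Perm (Fin n), μ (y ∘ π)) / n.factorial

/-- Tensor product of measures/functions on `X^k` and `X^m`. -/
noncomputable def tensFun {k m : ℕ} (μ : (Fin k → X) → ℝ) (ν : (Fin m → X) → ℝ) :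
    (Fin (k + m) → X) → ℝ :=
  fun y => μ (fun i => y (Fin.castAdd m i)) * ν (fun j => y (Fin.natAdd k j))

/-- Re-indexing along an equality of dimensions. -/
def castFun {m n : ℕ} (h : m = n) (μ : (Fin m → X) → ℝ) : (Fin n → X) → ℝ :=
  fun y => μ (fun i => y (Fin.cast h i))

/-- The product measure `ω^{⊗n}` (and likewise the tensor power `ξ^{⊗n}` of a function). -/
noncomputable def prodMeas (ω : X → ℝ) (n : ℕ) : (Fin n → X) → ℝ :=
  fun y => ∏ i, ω (y i)

/-- A function on `X^n` is symmetric. -/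
def IsSymmFun {n : ℕ} (f : (Fin n → X) → ℝ) : Prop :=
  ∀ (π : Equiv.Perm (Fin n)) (y : Fin n → X), f (y ∘ π) = f y

end Defs

/-- The set of surjections `Fin n → Fin k`; these correspond to set partitions of
`{1,…,n}` into `k` nonempty blocks together with an ordering of the blocks. -/
noncomputable def surjs (n k : ℕ) : Finset (Fin n → Fin k) :=
  Finset.univ.filter (fun g => Function.Surjective g)

/-- Cardinality of the fiber `g⁻¹(i)` (the size of block `i`). -/
def fiberCard {n k : ℕ} (g : Fin n → Fin k) (i : Fin k) : ℕ :=
  (Finset.univ.filter (fun j => g j = i)).card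

section Ops

variable {X : Type*} [Fintype X] [DecidableEq X]

/-- Stirling operator of the second kind `S(n,k) = Σ_{λ ∈ UP(n,k)} D_λ`:
summing the substitute-and-symmetrize operators over unordered partitions of `{1,…,n}`
into `k` nonempty blocks is the same as summing `f(y ∘ g)` over the surjections
`g : Fin n → Fin k` and dividing by `k!`. -/
noncomputable def Sop (n k : ℕ) (f : (Fin n → X) → ℝ) : (Fin k → X) → ℝ :=
  fun y => (∑ g ∈ surjs n k, f (y ∘ g)) / k.factorial

/-- Unsigned Stirling operator of the first kind
`c(n,k) = Σ_{λ={λ₁,…,λ_k} ∈ UP(n,k)} (|λ₁|−1)!⋯(|λ_k|−1)! · D_λ`. -/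
noncomputable def cop (n k : ℕ) (f : (Fin n → X) → ℝ) : (Fin k → X) → ℝ :=
  fun y => (∑ g ∈ surjs n k, (∏ i : Fin k, ((fiberCard g i - 1).factorial : ℝ)) * f (y ∘ g)) /
    k.factorial

/-- Stirling operator of the first kind `s(n,k) = (−1)^{n−k} c(n,k)`. -/
noncomputable def sop (n k : ℕ) (f : (Fin n → X) → ℝ) : (Fin k → X) → ℝ :=
  fun y => (-1 : ℝ) ^ (n - k) * cop n k f y

/-- Lah operator `L(n,k) = Σ_{λ={λ₁,…,λ_k} ∈ UP(n,k)} |λ₁|!⋯|λ_k|! · D_λ`. -/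
noncomputable def Lop (n k : ℕ) (f : (Fin n → X) → ℝ) : (Fin k → X) → ℝ :=
  fun y => (∑ g ∈ surjs n k, (∏ i : Fin k, ((fiberCard g i).factorial : ℝ)) * f (y ∘ g)) /
    k.factorial

end Ops

/-!
Writing `c a` for the number of coordinates of `y` equal to `a`, the falling factorial measure is
`(ω)_n(y) = ∏ₐ (ω a)_{c a}`, a product of falling factorial polynomials. Replacing `ω` by
`ω + δ_x` changes only the factor at `x`, and `(t + 1)_c - (t)_c = c (t)_{c-1}`. On the other
side, deleting a coordinate `y j = x` lowers `c x` by one, so each of the `c x` nonzero terms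
`δ_x(y j) (ω)_{n-1}(y without j)` contributes the same product. The symmetrization only averages
these terms over `j`.
-/

open Finset Polynomial

lemma descPochhammer_eval_add_one_sub {R : Type*} [CommRing R] (n : ℕ) (r : R) :
    (descPochhammer R n).eval (r + 1) - (descPochhammer R n).eval r
      = n * (descPochhammer R (n - 1)).eval r := by
  cases n with
  | zero => simp
  | succ n =>
    have h := congr_arg (eval (r + 1)) (descPochhammer_succ_comp_X_sub_one (R := R) n)
    simp only [eval_comp, eval_sub, eval_X, eval_one, add_sub_cancel_right, smul_eq_mul,
      eval_mul, eval_add, eval_natCast] at h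
    push_cast
    linear_combination -h

lemma card_filter_eq_card_filter_succAbove_add {X : Type*} [DecidableEq X] {k : ℕ}
    (z : Fin (k + 1) → X) (j : Fin (k + 1)) (a : X) :
    #{i | z i = a} = #{i | z (j.succAbove i) = a} + if z j = a then 1 else 0 := by
  simp only [card_filter]
  rw [Fin.sum_univ_succAbove _ j, add_comm]

lemma sum_perm_apply_zero {M : Type*} [AddCommMonoid M] {m : ℕ} (f : Fin (m + 1) → M) :
    ∑ π : Equiv.Perm (Fin (m + 1)), f (π 0) = m.factorial • ∑ p, f p := by
  rw [← Equiv.sum_comp Equiv.Perm.decomposeFin.symm, Fintype.sum_prod_type, smul_sum]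
  simp only [Equiv.Perm.decomposeFin_symm_apply_zero, sum_const, card_univ, Fintype.card_perm,
    Fintype.card_fin]

section FallingFactorial

variable {X : Type*} [DecidableEq X]

lemma ff_succ_eq_ff_castSucc_mul (ω : X → ℝ) (k : ℕ) (z : Fin (k + 1) → X) :
    ff ω (k + 1) z = ff ω k (fun i => z i.castSucc) *
      (ω (z (Fin.last k)) - #{i | z (Fin.castSucc i) = z (Fin.last k)}) := by
  rw [ff, card_filter]
  push_cast
  rfl

variable [Fintype X]

theorem ff_eq_prod_descPochhammer (ω : X → ℝ) (k : ℕ) (z : Fin k → X) :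
    ff ω k z = ∏ a, (descPochhammer ℝ #{i | z i = a}).eval (ω a) := by
  induction k with
  | zero => simp [ff]
  | succ k ih =>
    set b := z (Fin.last k)
    have factor (a : X) : (descPochhammer ℝ #{i | z i = a}).eval (ω a)
        = (descPochhammer ℝ #{i | z (Fin.castSucc i) = a}).eval (ω a)
          * if b = a then ω a - #{i | z (Fin.castSucc i) = a} else 1 := by
      rw [card_filter_eq_card_filter_succAbove_add z (Fin.last k) a]
      simp only [Fin.succAbove_last]
      split_ifs <;> simp [descPochhammer_succ_eval]
    rw [ff_succ_eq_ff_castSucc_mul, ih, Fintype.prod_congr _ _ factor, prod_mul_distrib,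
      Fintype.prod_ite_eq]

lemma ff_congr_card_filter (ω : X → ℝ) {k : ℕ} {z z' : Fin k → X}
    (h : ∀ a, #{i | z i = a} = #{i | z' i = a}) : ff ω k z = ff ω k z' := by
  simp only [ff_eq_prod_descPochhammer, h]

theorem ff_add_diracMeas_sub_ff (ω : X → ℝ) (x : X) (n : ℕ) (y : Fin (n + 1) → X) :
    ff (ω + diracMeas x) (n + 1) y - ff ω (n + 1) y
      = ∑ j, diracMeas x (y j) * ff ω n (y ∘ j.succAbove) := by
  set c : X → ℕ := fun a => #{i | y i = a}
  set rest := ∏ a ∈ {x}ᶜ, (descPochhammer ℝ (c a)).eval (ω a)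
  have lhs : ff (ω + diracMeas x) (n + 1) y - ff ω (n + 1) y
      = c x * (descPochhammer ℝ (c x - 1)).eval (ω x) * rest := by
    have off_x : ∏ a ∈ {x}ᶜ, (descPochhammer ℝ (c a)).eval ((ω + diracMeas x) a) = rest :=
      prod_congr rfl fun a ha => by simp [diracMeas, (by simpa using ha : a ≠ x)]
    rw [ff_eq_prod_descPochhammer, ff_eq_prod_descPochhammer, Fintype.prod_eq_mul_prod_compl x,
      Fintype.prod_eq_mul_prod_compl x, off_x, ← sub_mul]
    simp only [Pi.add_apply, diracMeas, ↓reduceIte]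
    rw [descPochhammer_eval_add_one_sub]
  have deleted (j : Fin (n + 1)) (hj : y j = x) :
      ff ω n (y ∘ j.succAbove) = (descPochhammer ℝ (c x - 1)).eval (ω x) * rest := by
    have count (a : X) : #{i | (y ∘ j.succAbove) i = a} = c a - if x = a then 1 else 0 := by
      have := card_filter_eq_card_filter_succAbove_add y j a
      simp only [hj, Function.comp_apply, c] at this ⊢
      omega
    rw [ff_eq_prod_descPochhammer, Fintype.prod_eq_mul_prod_compl x]
    simp only [count, ↓reduceIte]
    congr 1
    exact prod_congr rfl fun a ha => by simp [(by simpa [eq_comm] using ha : x ≠ a)]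
  have rhs : ∑ j, diracMeas x (y j) * ff ω n (y ∘ j.succAbove)
      = ∑ j, if y j = x then (descPochhammer ℝ (c x - 1)).eval (ω x) * rest else 0 :=
    sum_congr rfl fun j _ => by
      by_cases hj : y j = x <;> simp [diracMeas, hj, deleted]
  rw [lhs, rhs, sum_ite, sum_const_zero, add_zero, sum_const, nsmul_eq_mul, mul_assoc]

end FallingFactorial

lemma castFun_tensFun_apply {X : Type*} {m : ℕ} (h : 1 + m = m + 1) (μ : (Fin 1 → X) → ℝ)
    (ν : (Fin m → X) → ℝ) (z : Fin (m + 1) → X) :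
    castFun h (tensFun μ ν) z = μ (fun _ => z 0) * ν (z ∘ Fin.succ) := by
  simp only [castFun, tensFun]
  congr 2 <;> funext i <;> congr 1 <;> ext
  · simp [Fin.fin_one_eq_zero i]
  · simp

theorem symmFun_castFun_tensFun_ff {X : Type*} [Fintype X] [DecidableEq X] (ω : X → ℝ) (x : X)
    (m : ℕ) (h : 1 + m = m + 1) (y : Fin (m + 1) → X) :
    symmFun (m + 1)
        (castFun h (tensFun (fun y1 : Fin 1 → X => if y1 0 = x then (1 : ℝ) else 0) (ff ω m))) y
      = (∑ p, diracMeas x (y p) * ff ω m (y ∘ p.succAbove)) / (m + 1) := by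
  have term (π : Equiv.Perm (Fin (m + 1))) :
      castFun h (tensFun (fun y1 : Fin 1 → X => if y1 0 = x then (1 : ℝ) else 0) (ff ω m)) (y ∘ π)
        = diracMeas x (y (π 0)) * ff ω m (y ∘ (π 0).succAbove) := by
    rw [castFun_tensFun_apply]
    refine congr_arg₂ _ rfl (ff_congr_card_filter ω fun a => ?_)
    have perm_inv : #{i | y (π i) = a} = #{i | y i = a} := by
      simp only [card_filter]
      exact Equiv.sum_comp π fun i => if y i = a then 1 else 0
    have delete_zero : #{i | y (π i) = a}
        = #{i | y (π (Fin.succ i)) = a} + if y (π 0) = a then 1 else 0 :=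
      card_filter_eq_card_filter_succAbove_add (y ∘ π) 0 a
    have delete_π0 := card_filter_eq_card_filter_succAbove_add y (π 0) a
    change #{i | y (π (Fin.succ i)) = a} = #{i | y ((π 0).succAbove i) = a}
    omega
  rw [symmFun, sum_congr rfl fun π _ => term π,
    sum_perm_apply_zero fun p => diracMeas x (y p) * ff ω m (y ∘ p.succAbove), Nat.factorial_succ,
    nsmul_eq_mul]
  push_cast
  field_simp

/-- The lowering identity
`(ω+δ_x)_n − (ω)_n = n · Sym(δ_x ⊗ (ω)_{n−1})`. -/
theorem fallingFactorial_lowering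
    {X : Type*} [Fintype X] [DecidableEq X] (ω : X → ℝ) (x : X) {n : ℕ} (hn : 1 ≤ n)
    (y : Fin n → X) :
    ff (ω + diracMeas x) n y - ff ω n y
      = (n : ℝ) *
          symmFun n (castFun (by omega : 1 + (n - 1) = n)
            (tensFun (fun y1 : Fin 1 → X => if y1 0 = x then (1 : ℝ) else 0)
              (ff ω (n - 1)))) y := by
  obtain ⟨m, rfl⟩ : ∃ m, n = m + 1 := ⟨n - 1, by omega⟩
  change _ = _ * symmFun (m + 1) (castFun _ (tensFun _ (ff ω m))) y
  rw [ff_add_diracMeas_sub_ff, symmFun_castFun_tensFun_ff]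
  push_cast
  field_simp
end

section
/- Let ω be a finitely supported signed measure on X and ξ : X → ℝ a function. Then for all n ≥ 0, the recurrence ⟨(ω)_{n+1}, ξ^{⊗(n+1)}⟩ = ⟨(ω)_n, ξ^{⊗n}⟩·⟨ω, ξ⟩ − n·⟨(ω)_n, ξ² ⊙ ξ^{⊗(n−1)}⟩ holds, where ⟨μ, f⟩ denotes the integral of f against μ. -/
open Finset

/-! Integrating the last coordinate of `(ω)_{n+1}` out against `ξ` leaves the factor
`⟨ω, ξ⟩ - (ξ(y₁) + ⋯ + ξ(y_n))` under `(ω)_n`; the subtracted part is `n` times the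
symmetrization of `ξ(y₁) · ξ^{⊗n}(y)`, because summing `ξ(y_{π 0})` over all permutations `π`
gives `(n - 1)! (ξ(y₁) + ⋯ + ξ(y_n))`. -/

section

variable {ι M : Type*} [Fintype ι] [DecidableEq ι] [AddCommMonoid M]

theorem sum_perm_apply_eq_sum_perm_apply (g : ι → M) (k l : ι) :
    ∑ π : Equiv.Perm ι, g (π k) = ∑ π : Equiv.Perm ι, g (π l) :=
  Fintype.sum_bijective (· * Equiv.swap k l) (Group.mulRight_bijective _) _ _ fun π => by
    simp [Equiv.Perm.mul_apply]

-- Double counting of the pairs `(π, j)`.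
theorem card_smul_sum_perm_apply (g : ι → M) (k : ι) :
    Fintype.card ι • ∑ π : Equiv.Perm ι, g (π k) = (Fintype.card ι).factorial • ∑ j, g j := by
  calc Fintype.card ι • ∑ π : Equiv.Perm ι, g (π k)
      = ∑ j : ι, ∑ π : Equiv.Perm ι, g (π j) := by
        simp [sum_perm_apply_eq_sum_perm_apply g _ k]
    _ = ∑ π : Equiv.Perm ι, ∑ j, g j := by
        rw [sum_comm]
        exact sum_congr rfl fun π _ => Equiv.sum_comp π g
    _ = (Fintype.card ι).factorial • ∑ j, g j := by simp [Fintype.card_perm]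

end

theorem sum_sub_sum_ite_mul {X ι R : Type*} [Fintype X] [DecidableEq X] [Fintype ι]
    [CommRing R] (ω ξ : X → R) (z : ι → X) :
    ∑ a, (ω a - ∑ i, if z i = a then 1 else 0) * ξ a = ∑ a, ω a * ξ a - ∑ i, ξ (z i) := by
  simp only [sub_mul, sum_sub_distrib, sum_mul, ite_mul, one_mul, zero_mul]
  rw [sum_comm]
  simp

section

variable {X : Type*} {n : ℕ}

theorem isSymmFun_prodMeas (ξ : X → ℝ) : IsSymmFun (prodMeas ξ n) := fun π y =>
  Equiv.prod_comp π fun i => ξ (y i)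

theorem natCast_mul_symmFun_apply_mul {F : (Fin n → X) → ℝ} (hF : IsSymmFun F) (ξ : X → ℝ)
    (k : Fin n) (z : Fin n → X) :
    (n : ℝ) * symmFun n (fun y => ξ (y k) * F y) z = (∑ i, ξ (z i)) * F z := by
  have hcount := card_smul_sum_perm_apply (fun i => ξ (z i)) k
  simp only [Fintype.card_fin, nsmul_eq_mul] at hcount
  have : (n.factorial : ℝ) ≠ 0 := by positivity
  have hF' : ∀ π : Equiv.Perm (Fin n), F (z ∘ π) = F z := fun π => hF π z
  simp only [symmFun, Function.comp_apply, hF', ← sum_mul]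
  field_simp
  linear_combination F z * hcount

variable [Fintype X] [DecidableEq X]

theorem pairing_ff_succ (ω : X → ℝ) (f : (Fin (n + 1) → X) → ℝ) :
    pairing (n + 1) (ff ω (n + 1)) f = ∑ z : Fin n → X,
      ff ω n z * ∑ a, (ω a - ∑ i : Fin n, if z i = a then 1 else 0) * f (Fin.snoc z a) := by
  rw [pairing, ← (Fin.snocEquiv _).sum_comp, Fintype.sum_prod_type, sum_comm]
  simp only [Fin.snocEquiv, Equiv.coe_fn_mk, ff, Fin.snoc_castSucc, Fin.snoc_last, mul_sum,
    mul_assoc]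

theorem pairing_ff_succ_prod (ω ξ : X → ℝ) :
    pairing (n + 1) (ff ω (n + 1)) (fun y => ∏ i, ξ (y i)) = ∑ z : Fin n → X,
      ff ω n z * (∏ i, ξ (z i)) * (∑ a, ω a * ξ a - ∑ i, ξ (z i)) := by
  simp only [pairing_ff_succ, Fin.prod_univ_castSucc, Fin.snoc_castSucc, Fin.snoc_last,
    ← sum_sub_sum_ite_mul, mul_sum]
  exact sum_congr rfl fun z _ => sum_congr rfl fun a _ => by ring

end

/-- Recurrence for the falling factorials:
`⟨(ω)_{n+1}, ξ^{⊗(n+1)}⟩ = ⟨(ω)_n, ξ^{⊗n}⟩·⟨ω, ξ⟩ − n·⟨(ω)_n, ξ² ⊙ ξ^{⊗(n−1)}⟩`. -/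
theorem fallingFactorial_recurrence
    {X : Type*} [Fintype X] [DecidableEq X] (ω ξ : X → ℝ) (n : ℕ) :
    pairing (n + 1) (ff ω (n + 1)) (fun y => ∏ i, ξ (y i))
      = pairing n (ff ω n) (fun y => ∏ i, ξ (y i)) * (∑ a, ω a * ξ a)
        - (n : ℝ) *
            pairing n (ff ω n)
              (symmFun n (fun y => if h : 0 < n then ξ (y ⟨0, h⟩) * ∏ i, ξ (y i) else 0)) := by
  have hsymm : ∀ z, (n : ℝ) * symmFun n
      (fun y => if h : 0 < n then ξ (y ⟨0, h⟩) * ∏ i, ξ (y i) else 0) z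
        = (∑ i, ξ (z i)) * ∏ i, ξ (z i) := by
    intro z
    rcases n with _ | m
    · simp
    · simpa [prodMeas] using natCast_mul_symmFun_apply_mul (isSymmFun_prodMeas ξ) ξ 0 z
  rw [pairing_ff_succ_prod, pairing, pairing, sum_mul, mul_sum, ← sum_sub_distrib]
  refine sum_congr rfl fun z _ => ?_
  linear_combination ff ω n z * hsymm z
end

section
/- Let ω be a finitely supported signed measure on X and ξ : X → ℝ a function. Then as formal power series in a parameter t (or for ξ with ⟨|ω|, |log(1+tξ)|⟩ finite), Σ_{n=0}^{∞} (tⁿ/n!)·⟨(ω)_n, ξ^{⊗n}⟩ = exp(⟨ω, log(1+tξ)⟩), i.e., the coefficient of tⁿ on both sides agree for every n. -/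
open Finset

/-- The formal power series `⟨ω, log(1+tξ)⟩ = Σ_{m≥1} tᵐ Σ_x ω(x)·(−1)^{m−1} ξ(x)ᵐ/m`. -/
noncomputable def logPairingSeries {X : Type*} [Fintype X] (ω ξ : X → ℝ) : PowerSeries ℝ :=
  PowerSeries.mk fun m => if m = 0 then 0 else ∑ x, ω x * ((-1 : ℝ) ^ (m - 1) * ξ x ^ m / m)

/-!
Write `G_ω = Σ tⁿ/n! ⟨(ω)_n, ξ^{⊗n}⟩` and `E_ω = exp ⟨ω, log(1+tξ)⟩`. Peeling off the first
coordinate of `(ω)_{n+1}` gives `G_ω' = Σ_x ω(x) ξ(x) G_{ω-δ_x}`. Since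
`⟨δ_x, log(1+tξ)⟩' = ξ(x)/(1+tξ(x))`, one has `E_{ω-δ_x} (1+tξ(x)) = E_ω`, so `E` satisfies the same
equation `E_ω' = E_ω ⟨ω, log(1+tξ)⟩' = Σ_x ω(x) ξ(x) E_{ω-δ_x}`. The differences `G_ω - E_ω` then
form a family of power series with zero constant terms whose derivatives lie in the ideal the
family generates; such a family vanishes, coefficient by coefficient.
-/

namespace PowerSeries

theorem eq_zero_of_derivative_mem_span {R : Type*} [CommRing R] [IsAddTorsionFree R]
    {S : Set R⟦X⟧} (h0 : ∀ f ∈ S, constantCoeff f = 0)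
    (hd : ∀ f ∈ S, d⁄dX R f ∈ Ideal.span S) : ∀ f ∈ S, f = 0 := by
  suffices h : ∀ n, ∀ f ∈ S, X ^ n ∣ f by
    intro f hf
    ext n
    exact X_pow_dvd_iff.mp (h (n + 1) f hf) n n.lt_succ_self
  intro n
  induction n with
  | zero => simp
  | succ n ih =>
    intro f hf
    refine X_pow_dvd_iff.mpr fun m hm => ?_
    rcases Nat.lt_succ_iff_lt_or_eq.mp hm with hm | rfl
    · exact X_pow_dvd_iff.mp (ih f hf) m hm
    cases m with
    | zero => simpa using h0 f hf
    | succ k =>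
      -- `(k + 1) • coeff (k + 1) f = coeff k f'`, and `f' ∈ (X ^ (k + 1))` by induction
      have hspan : Ideal.span S ≤ Ideal.span {X ^ (k + 1)} :=
        Ideal.span_le.mpr fun g hg => Ideal.mem_span_singleton.mpr (ih g hg)
      have hdf : coeff k (d⁄dX R f) = 0 :=
        X_pow_dvd_iff.mp (Ideal.mem_span_singleton.mp (hspan (hd f hf))) k k.lt_succ_self
      rw [coeff_derivative, ← Nat.cast_succ, mul_comm, ← nsmul_eq_mul] at hdf
      exact (smul_eq_zero.mp hdf).resolve_left k.succ_ne_zero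

variable {K : Type*} [Field K] [CharZero K]

theorem coeff_exp_subst {F : K⟦X⟧} (hF : constantCoeff F = 0) (n : ℕ) :
    coeff n ((exp K).subst F) = ∑ k ∈ range (n + 1), coeff n (F ^ k) / (k.factorial : K) := by
  rw [coeff_subst' (HasSubst.of_constantCoeff_zero' hF), finsum_eq_sum_of_support_subset]
  · refine Finset.sum_congr rfl fun k _ => ?_
    simp [coeff_exp, div_eq_inv_mul]
  · intro k hk
    simp only [Function.mem_support, ne_eq] at hk
    simp only [coe_range, Set.mem_Iio]
    by_contra hnk
    apply hk
    have hdvd : X ^ k ∣ F ^ k := pow_dvd_pow_of_dvd (X_dvd_iff.mpr hF) k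
    rw [X_pow_dvd_iff.mp hdvd n (by omega), smul_zero]

theorem constantCoeff_exp_subst {F : K⟦X⟧} (hF : constantCoeff F = 0) :
    constantCoeff ((exp K).subst F) = 1 := by
  simpa using coeff_exp_subst hF 0

theorem derivative_exp_subst {F : K⟦X⟧} (hF : constantCoeff F = 0) :
    d⁄dX K ((exp K).subst F) = (exp K).subst F * d⁄dX K F := by
  rw [derivative_subst (HasSubst.of_constantCoeff_zero' hF), derivative_exp]

end PowerSeries

section LogPairing

open PowerSeries

variable {α : Type*} [Fintype α]

theorem constantCoeff_logPairingSeries (ω ξ : α → ℝ) :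
    constantCoeff (logPairingSeries ω ξ) = 0 := by
  simp [logPairingSeries, ← coeff_zero_eq_constantCoeff_apply]

theorem logPairingSeries_sub (ω ν ξ : α → ℝ) :
    logPairingSeries (fun a => ω a - ν a) ξ = logPairingSeries ω ξ - logPairingSeries ν ξ := by
  ext m
  simp only [logPairingSeries, coeff_mk, map_sub]
  split_ifs
  · simp
  · simp only [sub_mul, sum_sub_distrib]

variable [DecidableEq α]

theorem logPairingSeries_eq_sum (ω ξ : α → ℝ) :
    logPairingSeries ω ξ = ∑ x, C (ω x) * logPairingSeries (diracMeas x) ξ := by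
  ext m
  simp only [logPairingSeries, coeff_mk, map_sum, coeff_C_mul]
  split_ifs
  · simp
  · simp [diracMeas]

theorem derivative_logPairingSeries_diracMeas_mul (ξ : α → ℝ) (x : α) :
    d⁄dX ℝ (logPairingSeries (diracMeas x) ξ) * (1 + C (ξ x) * X) = C (ξ x) := by
  have hcoeff : ∀ n, coeff n (d⁄dX ℝ (logPairingSeries (diracMeas x) ξ)) = ξ x * (-ξ x) ^ n := by
    intro n
    simp only [logPairingSeries, diracMeas, ite_mul, one_mul, zero_mul, sum_ite_eq', mem_univ,
      if_true, coeff_derivative, coeff_mk, Nat.add_eq_zero_iff, one_ne_zero, and_false, if_false,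
      add_tsub_cancel_right, Nat.cast_add, Nat.cast_one]
    field_simp
    ring
  ext n
  cases n with
  | zero =>
    simp only [mul_add, mul_one, ← mul_assoc, coeff_zero_mul_X, map_add, add_zero, hcoeff,
      coeff_C, pow_zero, mul_one, if_true]
  | succ n =>
    simp only [mul_add, mul_one, ← mul_assoc, coeff_succ_mul_X, map_add, coeff_mul_C, hcoeff,
      coeff_C, Nat.succ_ne_zero, if_false]
    ring

end LogPairing

section FallingFactorial

open PowerSeries

variable {α : Type*} [DecidableEq α]

theorem ff_succ_cons (ω : α → ℝ) (n : ℕ) (x : α) (z : Fin n → α) :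
    ff ω (n + 1) (Fin.cons x z) = ω x * ff (fun a => ω a - diracMeas x a) n z := by
  induction n generalizing ω with
  | zero => simp [ff, Fin.last]
  | succ n ih =>
    have hinit : (fun i : Fin (n + 1) => (Fin.cons x z : Fin (n + 2) → α) i.castSucc)
        = Fin.cons x (fun i => z i.castSucc) := by
      funext i
      cases i using Fin.cases with
      | zero => rfl
      | succ j => rw [← Fin.succ_castSucc, Fin.cons_succ, Fin.cons_succ]
    have hlast : (Fin.cons x z : Fin (n + 2) → α) (Fin.last (n + 1)) = z (Fin.last n) := by
      rw [← Fin.succ_last, Fin.cons_succ]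
    show ff ω (n + 1) _ * _ = ω x * (ff _ n _ * _)
    rw [hinit, hlast, ih, Fin.sum_univ_succ]
    simp only [← Fin.succ_castSucc, Fin.cons_succ, Fin.castSucc_zero, Fin.cons_zero, diracMeas,
      eq_comm (a := x)]
    ring

variable [Fintype α]

theorem pairing_ff_succ_s4 (ω ξ : α → ℝ) (n : ℕ) :
    pairing (n + 1) (ff ω (n + 1)) (prodMeas ξ (n + 1))
      = ∑ x, ω x * ξ x * pairing n (ff (fun a => ω a - diracMeas x a) n) (prodMeas ξ n) := by
  rw [pairing, ← (Fin.consEquiv fun _ => α).sum_comp, Fintype.sum_prod_type]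
  refine Finset.sum_congr rfl fun x _ => ?_
  rw [pairing, Finset.mul_sum]
  refine Finset.sum_congr rfl fun z _ => ?_
  rw [show (Fin.consEquiv fun _ => α) (x, z) = Fin.cons x z from rfl, ff_succ_cons]
  simp only [prodMeas, Fin.prod_univ_succ, Fin.cons_zero, Fin.cons_succ]
  ring

noncomputable def fallingFactorialSeries (ω ξ : α → ℝ) : ℝ⟦X⟧ :=
  mk fun n => pairing n (ff ω n) (prodMeas ξ n) / n.factorial

theorem constantCoeff_fallingFactorialSeries (ω ξ : α → ℝ) :
    constantCoeff (fallingFactorialSeries ω ξ) = 1 := by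
  simp [fallingFactorialSeries, ← coeff_zero_eq_constantCoeff_apply, pairing, ff, prodMeas]

theorem derivative_fallingFactorialSeries (ω ξ : α → ℝ) :
    d⁄dX ℝ (fallingFactorialSeries ω ξ)
      = ∑ x, C (ω x * ξ x) * fallingFactorialSeries (fun a => ω a - diracMeas x a) ξ := by
  ext n
  simp only [fallingFactorialSeries, coeff_derivative, coeff_mk, map_sum, coeff_C_mul,
    pairing_ff_succ_s4, Nat.factorial_succ, Nat.cast_mul, Finset.sum_div, Finset.sum_mul]
  refine Finset.sum_congr rfl fun x _ => ?_
  field_simp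
  push_cast
  ring

end FallingFactorial

section ExpLogPairing

open PowerSeries

variable {α : Type*} [Fintype α] [DecidableEq α]

theorem exp_subst_logPairingSeries_sub_diracMeas_mul (ω ξ : α → ℝ) (x : α) :
    (exp ℝ).subst (logPairingSeries (fun a => ω a - diracMeas x a) ξ) * (1 + C (ξ x) * X)
      = (exp ℝ).subst (logPairingSeries ω ξ) := by
  rw [logPairingSeries_sub]
  set L := logPairingSeries ω ξ
  set δ := logPairingSeries (diracMeas x) ξ
  have hL : constantCoeff L = 0 := constantCoeff_logPairingSeries ω ξ
  have hLδ : constantCoeff (L - δ) = 0 := by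
    rw [map_sub, hL, constantCoeff_logPairingSeries, sub_zero]
  set H := (exp ℝ).subst (L - δ) * (1 + C (ξ x) * X) - (exp ℝ).subst L
  suffices H = 0 from sub_eq_zero.mp this
  refine eq_zero_of_derivative_mem_span (S := {H}) ?_ ?_ H rfl
  · rintro _ rfl
    simp [H, constantCoeff_exp_subst hL, constantCoeff_exp_subst hLδ]
  · rintro _ rfl
    have hH : d⁄dX ℝ H = d⁄dX ℝ L * H := by
      simp only [H, map_sub, Derivation.leibniz, map_add, derivative_exp_subst hL,
        derivative_exp_subst hLδ, smul_eq_mul, derivative_C, derivative_X, derivative_one]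
      linear_combination (-(exp ℝ).subst (L - δ)) * derivative_logPairingSeries_diracMeas_mul ξ x
    rw [hH]
    exact Ideal.mul_mem_left _ _ (Ideal.subset_span rfl)

theorem derivative_exp_subst_logPairingSeries (ω ξ : α → ℝ) :
    d⁄dX ℝ ((exp ℝ).subst (logPairingSeries ω ξ))
      = ∑ x, C (ω x * ξ x) * (exp ℝ).subst (logPairingSeries (fun a => ω a - diracMeas x a) ξ) := by
  have hL : d⁄dX ℝ (logPairingSeries ω ξ)
      = ∑ x, C (ω x) * d⁄dX ℝ (logPairingSeries (diracMeas x) ξ) := by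
    conv_lhs => rw [logPairingSeries_eq_sum]
    simp [Derivation.leibniz]
  rw [derivative_exp_subst (constantCoeff_logPairingSeries ω ξ), hL, Finset.mul_sum]
  refine Finset.sum_congr rfl fun x _ => ?_
  rw [← exp_subst_logPairingSeries_sub_diracMeas_mul ω ξ x, map_mul]
  linear_combination (C (ω x) * (exp ℝ).subst (logPairingSeries (fun a => ω a - diracMeas x a) ξ))
    * derivative_logPairingSeries_diracMeas_mul ξ x

theorem fallingFactorialSeries_eq_exp_subst (ω ξ : α → ℝ) :
    fallingFactorialSeries ω ξ = (exp ℝ).subst (logPairingSeries ω ξ) := by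
  set F := fun ν => fallingFactorialSeries ν ξ - (exp ℝ).subst (logPairingSeries ν ξ)
  refine sub_eq_zero.mp (eq_zero_of_derivative_mem_span (S := Set.range F) ?_ ?_ (F ω) ⟨ω, rfl⟩)
  · rintro _ ⟨ν, rfl⟩
    simp [F, constantCoeff_fallingFactorialSeries,
      constantCoeff_exp_subst (constantCoeff_logPairingSeries ν ξ)]
  · rintro _ ⟨ν, rfl⟩
    rw [map_sub, derivative_fallingFactorialSeries, derivative_exp_subst_logPairingSeries,
      ← Finset.sum_sub_distrib]
    refine Ideal.sum_mem _ fun x _ => ?_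
    rw [← mul_sub]
    exact Ideal.mul_mem_left _ _ (Ideal.subset_span ⟨_, rfl⟩)

end ExpLogPairing

/-- As formal power series in `t`,
`Σ_{n≥0} (tⁿ/n!)·⟨(ω)_n, ξ^{⊗n}⟩ = exp(⟨ω, log(1+tξ)⟩)`, i.e. the coefficients of `tⁿ`
agree for every `n`.  Since `⟨ω, log(1+tξ)⟩` has zero constant term, the `n`-th
coefficient of its exponential `Σ_k F^k/k!` is `Σ_{k=0}^{n} (coeff n of F^k)/k!`. -/
theorem fallingFactorial_generatingFunction
    {X : Type*} [Fintype X] [DecidableEq X] (ω ξ : X → ℝ) (n : ℕ) :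
    (1 / (n.factorial : ℝ)) * pairing n (ff ω n) (fun y => ∏ i, ξ (y i))
      = ∑ k ∈ Finset.range (n + 1),
          (PowerSeries.coeff n ((logPairingSeries ω ξ) ^ k)) / (k.factorial : ℝ) := by
  rw [← PowerSeries.coeff_exp_subst (constantCoeff_logPairingSeries ω ξ),
    ← fallingFactorialSeries_eq_exp_subst, fallingFactorialSeries, PowerSeries.coeff_mk,
    one_div_mul_eq_div]
  rfl
end

section
/- Define, for a finite set X and k ≤ n, the unsigned Stirling operator of the first kind c(n,k) acting on symmetric functions f : X^n → ℝ by (c(n,k)f) = Σ_{λ={λ₁,…,λ_k} ∈ UP(n,k)} (|λ₁|−1)!⋯(|λ_k|−1)! · D_λ f. Then for every finitely supported signed measure ω on X and every symmetric f : X^n → ℝ, ⟨(ω)^{(n)}, f⟩ = Σ_{k=1}^{n} ⟨ω^{⊗k}, c(n,k)f⟩, where (ω)^{(n)} := (−1)ⁿ·(−ω)_n is the rising factorial measure. -/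
open Finset

/-!
Both sides satisfy the same recursion in `n`. Splitting off the last coordinate `x`, the
rising factorial density gains the factor `ω(x) + #{i ≤ n : yᵢ = x}`, so
`⟨(ω)^{(n+1)}, f⟩ = Σₓ ω(x) ⟨(ω)^{(n)}, f(·, x)⟩ + Σᵢ ⟨(ω)^{(n)}, f(·, yᵢ)⟩`.
The weight `(|λ₁|−1)!⋯(|λ_k|−1)!` counts the ways to arrange each block of `λ` in a cycle.
In a partition of `n + 1` points the last point either forms a singleton block, which gives
`ω(x)` times a term of `c(n,k)`, or it is inserted after one of the `m` points of a block
of size `m` of a partition of `n` points, which gives the term of `c(n,k+1)` with the last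
variable set equal to one of the first `n`. Induction from `n = 0` closes the argument.
-/
open Function

section Surjections

variable {n k : ℕ}

lemma mem_surjs {g : Fin n → Fin k} : g ∈ surjs n k ↔ Surjective g := by
  simp [surjs]

lemma surjs_eq_empty_of_lt (h : n < k) : surjs n k = ∅ :=
  Finset.filter_false_of_mem fun g _ hg => by
    have := Fintype.card_le_of_surjective g hg
    simp only [Fintype.card_fin] at this
    omega

lemma surjs_zero_right (hn : n ≠ 0) : surjs n 0 = ∅ :=
  Finset.filter_false_of_mem fun g _ _ => (g ⟨0, Nat.pos_of_ne_zero hn⟩).elim0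

lemma surjs_zero_zero : surjs 0 0 = Finset.univ :=
  Finset.filter_true_of_mem fun _ _ i => i.elim0

lemma surjective_snoc_iff {m : ℕ} {g : Fin n → Fin m} {a : Fin m} :
    Surjective (Fin.snoc g a : Fin (n + 1) → Fin m) ↔ ∀ b ≠ a, b ∈ Set.range g := by
  simp [← Set.range_eq_univ, Set.eq_univ_iff_forall, or_iff_not_imp_left]

lemma exists_surjective_succAbove_comp {g : Fin n → Fin (k + 1)} {a : Fin (k + 1)}
    (hg : Set.range g = {a}ᶜ) : ∃ g' : Fin n → Fin k, Surjective g' ∧ a.succAbove ∘ g' = g := by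
  have hmem : ∀ j, g j ∈ Set.range a.succAbove := fun j => by
    rw [Fin.range_succAbove, ← hg]; exact ⟨j, rfl⟩
  choose g' hg' using hmem
  refine ⟨g', fun m => ?_, funext hg'⟩
  obtain ⟨j, hj⟩ : a.succAbove m ∈ Set.range g := by rw [hg]; exact Fin.succAbove_ne a m
  exact ⟨j, a.succAbove_right_injective ((hg' j).trans hj)⟩

lemma sum_surjs_succ {M : Type*} [AddCommMonoid M] (F : (Fin (n + 1) → Fin (k + 1)) → M) :
    ∑ g ∈ surjs (n + 1) (k + 1), F g
      = ∑ a, ∑ g ∈ surjs n (k + 1), F (Fin.snoc g a)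
        + ∑ a, ∑ g ∈ surjs n k, F (Fin.snoc (a.succAbove ∘ g) a) := by
  rw [← Finset.sum_filter_add_sum_filter_not _ (fun g => Surjective (Fin.init g))]
  congr 1
  · rw [Finset.sum_comm, ← Finset.sum_product']
    refine Finset.sum_nbij' (fun g => (Fin.init g, g (Fin.last n))) (fun p => Fin.snoc p.1 p.2)
      ?_ ?_ ?_ ?_ ?_
    · intro g hg
      simp_all [mem_surjs]
    · rintro ⟨g, a⟩ hg
      simp only [Finset.mem_product, mem_surjs, Finset.mem_filter, Fin.init_snoc] at hg ⊢
      exact ⟨surjective_snoc_iff.2 fun b _ => hg.1 b, hg.1⟩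
    · intro g _
      exact Fin.snoc_init_self g
    · rintro ⟨g, a⟩ _
      simp
    · intro g _
      rw [Fin.snoc_init_self]
  · rw [← Finset.sum_product']
    symm
    refine Finset.sum_bij (fun p _ => Fin.snoc (p.1.succAbove ∘ p.2) p.1) ?_ ?_ ?_ ?_
    · rintro ⟨a, g⟩ hg
      simp only [Finset.mem_product, mem_surjs, Finset.mem_filter, Fin.init_snoc] at hg ⊢
      refine ⟨surjective_snoc_iff.2 fun b hb => ?_, fun h => ?_⟩
      · rw [Set.range_comp, hg.2.range_eq, Set.image_univ, Fin.range_succAbove]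
        exact hb
      · obtain ⟨j, hj⟩ := h a
        exact Fin.succAbove_ne a (g j) hj
    · rintro ⟨a₁, g₁⟩ - ⟨a₂, g₂⟩ - h
      obtain ⟨hg, rfl⟩ := Fin.snoc_inj.1 h
      simpa using (Fin.succAbove_right_injective.comp_left hg)
    · intro g hg
      simp only [Finset.mem_filter, mem_surjs] at hg
      obtain ⟨hsurj, hinit⟩ := hg
      rw [← Fin.snoc_init_self g, surjective_snoc_iff] at hsurj
      have hrange : Set.range (Fin.init g) = {g (Fin.last n)}ᶜ := by
        refine Set.ext fun b => ⟨fun hb hlast => hinit fun c => ?_, hsurj b⟩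
        by_cases hc : c = g (Fin.last n)
        · exact hc ▸ hlast ▸ hb
        · exact hsurj c hc
      obtain ⟨g', hg', hcomp⟩ := exists_surjective_succAbove_comp hrange
      refine ⟨(g (Fin.last n), g'), by simpa [mem_surjs] using hg', ?_⟩
      rw [hcomp, Fin.snoc_init_self]
    · intros
      rfl

end Surjections

section BlockSizes

variable {n k : ℕ}

lemma fiberCard_pos {g : Fin n → Fin k} (hg : Surjective g) (i : Fin k) : 0 < fiberCard g i := by
  obtain ⟨j, hj⟩ := hg i
  exact Finset.card_pos.2 ⟨j, by simp [hj]⟩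

lemma fiberCard_snoc (g : Fin n → Fin k) (a i : Fin k) :
    fiberCard (Fin.snoc g a : Fin (n + 1) → Fin k) i = fiberCard g i + if a = i then 1 else 0 := by
  simp only [fiberCard, Finset.card_filter, Fin.sum_univ_castSucc, Fin.snoc_castSucc, Fin.snoc_last]

lemma fiberCard_succAbove_comp_self (g : Fin n → Fin k) (a : Fin (k + 1)) :
    fiberCard (a.succAbove ∘ g) a = 0 := by
  simp [fiberCard, Fin.succAbove_ne]

lemma fiberCard_succAbove_comp_succAbove (g : Fin n → Fin k) (a : Fin (k + 1)) (i : Fin k) :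
    fiberCard (a.succAbove ∘ g) (a.succAbove i) = fiberCard g i := by
  simp [fiberCard, Fin.succAbove_right_injective.eq_iff]

lemma sum_comp_eq_sum_fiberCard_smul {M : Type*} [AddCommMonoid M] (g : Fin n → Fin k)
    (h : Fin k → M) : ∑ j, h (g j) = ∑ i, fiberCard g i • h i := by
  rw [← Fintype.sum_fiberwise' g h]
  simp [fiberCard, Fintype.card_subtype]

noncomputable def cycleWeight (g : Fin n → Fin k) : ℝ :=
  ∏ i, ((fiberCard g i - 1).factorial : ℝ)

lemma cycleWeight_snoc {g : Fin n → Fin k} (hg : Surjective g) (a : Fin k) :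
    cycleWeight (Fin.snoc g a : Fin (n + 1) → Fin k) = fiberCard g a * cycleWeight g := by
  unfold cycleWeight
  have hothers : ∀ i ∈ Finset.univ.erase a,
      fiberCard (Fin.snoc g a : Fin (n + 1) → Fin k) i = fiberCard g i := fun i hi => by
    rw [fiberCard_snoc, if_neg (Finset.ne_of_mem_erase hi).symm, add_zero]
  rw [← Finset.mul_prod_erase _ _ (Finset.mem_univ a),
    ← Finset.mul_prod_erase _ _ (Finset.mem_univ a),
    Finset.prod_congr rfl fun i hi => by rw [hothers i hi], fiberCard_snoc, if_pos rfl,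
    Nat.add_sub_cancel, ← Nat.mul_factorial_pred (fiberCard_pos hg a).ne']
  push_cast
  ring

lemma cycleWeight_snoc_succAbove_comp (g : Fin n → Fin k) (a : Fin (k + 1)) :
    cycleWeight (Fin.snoc (a.succAbove ∘ g) a : Fin (n + 1) → Fin (k + 1)) = cycleWeight g := by
  simp only [cycleWeight, Fin.prod_univ_succAbove _ a, fiberCard_snoc,
    fiberCard_succAbove_comp_self, fiberCard_succAbove_comp_succAbove,
    if_neg (Fin.succAbove_ne a _).symm]
  simp

end BlockSizes

section Pairing

variable {X : Type*} [Fintype X] {n k : ℕ}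

lemma sum_pi_fin_succ_insertNth {M : Type*} [AddCommMonoid M] (a : Fin (n + 1))
    (F : (Fin (n + 1) → X) → M) : ∑ y, F y = ∑ x, ∑ y : Fin n → X, F (a.insertNth x y) := by
  rw [← (Fin.insertNthEquiv (fun _ => X) a).sum_comp, Fintype.sum_prod_type]
  rfl

lemma sum_pi_fin_succ_snoc {M : Type*} [AddCommMonoid M] (F : (Fin (n + 1) → X) → M) :
    ∑ y, F y = ∑ y : Fin n → X, ∑ x, F (Fin.snoc y x) := by
  simp only [sum_pi_fin_succ_insertNth (Fin.last n), Fin.insertNth_last']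
  exact Finset.sum_comm

lemma pairing_prodMeas_comp_snoc_succAbove (ω : X → ℝ) (f : (Fin (n + 1) → X) → ℝ)
    (g : Fin n → Fin k) (a : Fin (k + 1)) :
    pairing (k + 1) (prodMeas ω (k + 1)) (fun z => f (z ∘ Fin.snoc (a.succAbove ∘ g) a))
      = ∑ x, ω x * pairing k (prodMeas ω k) (fun z => f (Fin.snoc (z ∘ g) x)) := by
  unfold pairing prodMeas
  rw [sum_pi_fin_succ_insertNth a]
  refine Finset.sum_congr rfl fun x _ => ?_
  rw [Finset.mul_sum]
  refine Finset.sum_congr rfl fun z _ => ?_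
  dsimp only
  rw [Fin.prod_univ_succAbove _ a, Fin.comp_snoc, ← Function.comp_assoc,
    Fin.insertNth_comp_succAbove, Fin.insertNth_apply_same]
  simp only [Fin.insertNth_apply_succAbove]
  ring

lemma sum_fiberCard_mul_pairing_comp_snoc (μ : (Fin k → X) → ℝ) (f : (Fin (n + 1) → X) → ℝ)
    (g : Fin n → Fin k) :
    ∑ a, (fiberCard g a : ℝ) * pairing k μ (fun z => f (z ∘ Fin.snoc g a))
      = ∑ i, pairing k μ (fun z => f (Fin.snoc (z ∘ g) (z (g i)))) := by
  simp only [pairing, Fin.comp_snoc, Finset.mul_sum]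
  rw [Finset.sum_comm, Finset.sum_comm (s := Finset.univ (α := Fin n))]
  refine Finset.sum_congr rfl fun z _ => ?_
  rw [sum_comp_eq_sum_fiberCard_smul g (fun a => μ z * f (Fin.snoc (z ∘ g) (z a)))]
  simp only [nsmul_eq_mul]

lemma factorial_mul_pairing_cop (μ : (Fin k → X) → ℝ) (f : (Fin n → X) → ℝ) :
    (k.factorial : ℝ) * pairing k μ (cop n k f)
      = ∑ g ∈ surjs n k, cycleWeight g * pairing k μ (fun z => f (z ∘ g)) := by
  simp only [pairing, cop, cycleWeight, Finset.mul_sum]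
  rw [Finset.sum_comm]
  refine Finset.sum_congr rfl fun z _ => ?_
  rw [mul_left_comm, mul_div_cancel₀ _ (by positivity), Finset.mul_sum]
  exact Finset.sum_congr rfl fun g _ => by ring

lemma pairing_cop_of_surjs_eq_empty (μ : (Fin k → X) → ℝ) (f : (Fin n → X) → ℝ)
    (h : surjs n k = ∅) : pairing k μ (cop n k f) = 0 := by
  simp [pairing, cop, h]

end Pairing

section Recursion

variable {X : Type*} [Fintype X] {n k : ℕ}

lemma pairing_prodMeas_cop_succ_succ (ω : X → ℝ) (f : (Fin (n + 1) → X) → ℝ) :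
    pairing (k + 1) (prodMeas ω (k + 1)) (cop (n + 1) (k + 1) f)
      = ∑ x, ω x * pairing k (prodMeas ω k) (cop n k (fun y => f (Fin.snoc y x)))
        + ∑ i : Fin n, pairing (k + 1) (prodMeas ω (k + 1))
            (cop n (k + 1) (fun y => f (Fin.snoc y (y i)))) := by
  refine mul_left_cancel₀ (by positivity : ((k + 1).factorial : ℝ) ≠ 0) ?_
  rw [factorial_mul_pairing_cop, sum_surjs_succ, mul_add, add_comm]
  congr 1
  · calc _ = ((k + 1 : ℕ) : ℝ) * ∑ g ∈ surjs n k, cycleWeight g *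
            ∑ x, ω x * pairing k (prodMeas ω k) (fun z => f (Fin.snoc (z ∘ g) x)) := by
          simp only [cycleWeight_snoc_succAbove_comp, pairing_prodMeas_comp_snoc_succAbove,
            Finset.sum_const, Finset.card_univ, Fintype.card_fin, nsmul_eq_mul]
      _ = _ := by
          simp only [Nat.factorial_succ, Nat.cast_mul, mul_assoc, Finset.mul_sum,
            mul_left_comm _ (ω _), factorial_mul_pairing_cop]
          exact Finset.sum_comm
  · simp only [Finset.mul_sum, factorial_mul_pairing_cop]
    calc _ = ∑ g ∈ surjs n (k + 1), cycleWeight g *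
            ∑ a, (fiberCard g a : ℝ) * pairing (k + 1) (prodMeas ω (k + 1))
              (fun z => f (z ∘ Fin.snoc g a)) := by
          rw [Finset.sum_comm]
          refine Finset.sum_congr rfl fun g hg => ?_
          simp only [cycleWeight_snoc (mem_surjs.1 hg), Finset.mul_sum, mul_assoc, mul_left_comm]
      _ = _ := by
          simp only [sum_fiberCard_mul_pairing_comp_snoc, Finset.mul_sum]
          exact Finset.sum_comm

lemma sum_range_pairing_cop_succ (μ : ∀ k, (Fin k → X) → ℝ) (f : (Fin n → X) → ℝ)
    (hn : n ≠ 0) :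
    ∑ k ∈ Finset.range (n + 1), pairing (k + 1) (μ (k + 1)) (cop n (k + 1) f)
      = ∑ k ∈ Finset.range (n + 1), pairing k (μ k) (cop n k f) := by
  have h := (Finset.sum_range_succ' (fun k => pairing k (μ k) (cop n k f)) (n + 1)).symm.trans
    (Finset.sum_range_succ _ (n + 1))
  rwa [pairing_cop_of_surjs_eq_empty _ _ (surjs_zero_right hn),
    pairing_cop_of_surjs_eq_empty _ _ (surjs_eq_empty_of_lt n.lt_succ_self), add_zero,
    add_zero] at h

end Recursion

section Rising

variable {X : Type*} [DecidableEq X] {n : ℕ}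

noncomputable def risingFactorial (ω : X → ℝ) (n : ℕ) : (Fin n → X) → ℝ :=
  fun y => (-1) ^ n * ff (-ω) n y

lemma risingFactorial_snoc (ω : X → ℝ) (y : Fin n → X) (x : X) :
    risingFactorial ω (n + 1) (Fin.snoc y x)
      = risingFactorial ω n y * (ω x + ∑ i, if y i = x then 1 else 0) := by
  simp only [risingFactorial, ff, Fin.snoc_castSucc, Fin.snoc_last, Pi.neg_apply]
  ring

lemma pairing_risingFactorial_succ [Fintype X] (ω : X → ℝ) (f : (Fin (n + 1) → X) → ℝ) :
    pairing (n + 1) (risingFactorial ω (n + 1)) f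
      = ∑ x, ω x * pairing n (risingFactorial ω n) (fun y => f (Fin.snoc y x))
        + ∑ i : Fin n, pairing n (risingFactorial ω n) (fun y => f (Fin.snoc y (y i))) := by
  simp only [pairing, sum_pi_fin_succ_snoc, risingFactorial_snoc, mul_add, add_mul,
    Finset.sum_add_distrib, Finset.mul_sum, Finset.sum_mul]
  congr 1
  · rw [Finset.sum_comm]
    exact Finset.sum_congr rfl fun y _ => Finset.sum_congr rfl fun x _ => by ring
  · refine Eq.trans ?_ Finset.sum_comm
    refine Finset.sum_congr rfl fun y _ => ?_
    rw [Finset.sum_comm]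
    simp [Finset.sum_ite_eq]

theorem pairing_risingFactorial_eq_sum_range [Fintype X] (ω : X → ℝ) (n : ℕ)
    (f : (Fin n → X) → ℝ) :
    pairing n (risingFactorial ω n) f
      = ∑ k ∈ Finset.range (n + 1), pairing k (prodMeas ω k) (cop n k f) := by
  induction n with
  | zero =>
    simp only [pairing, risingFactorial, ff, prodMeas, cop, surjs_zero_zero, Finset.univ_unique,
      Finset.sum_singleton, Finset.range_one, Finset.univ_eq_empty, Finset.prod_empty, pow_zero,
      mul_one, one_mul, zero_add, Nat.factorial_zero, Nat.cast_one, div_one]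
    exact congrArg f (Subsingleton.elim _ _)
  | succ n ih =>
    rw [pairing_risingFactorial_succ, Finset.sum_range_succ', pairing_cop_of_surjs_eq_empty _ _
      (surjs_zero_right n.succ_ne_zero), add_zero]
    simp only [pairing_prodMeas_cop_succ_succ, Finset.sum_add_distrib, ih, Finset.mul_sum]
    congr 1
    · exact Finset.sum_comm
    · refine Eq.trans ?_ Finset.sum_comm
      exact Finset.sum_congr rfl fun i _ =>
        (sum_range_pairing_cop_succ _ _ (Fin.pos i).ne').symm

end Rising

theorem stirling_first_kind_expansion_general
    {X : Type*} [Fintype X] [DecidableEq X] {n : ℕ} (hn : 1 ≤ n)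
    (ω : X → ℝ) (f : (Fin n → X) → ℝ) :
    pairing n (fun y => (-1 : ℝ) ^ n * ff (-ω) n y) f
      = ∑ k ∈ Finset.Icc 1 n, pairing k (prodMeas ω k) (cop n k f) := by
  change pairing n (risingFactorial ω n) f = _
  rw [pairing_risingFactorial_eq_sum_range, Finset.sum_range_eq_add_Ico _ (by omega : 0 < n + 1),
    pairing_cop_of_surjs_eq_empty _ _ (surjs_zero_right (by omega)), zero_add,
    Finset.Ico_add_one_right_eq_Icc]

/-- With the rising factorial measure `(ω)^{(n)} := (−1)ⁿ·(−ω)_n`, for every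
finitely supported signed measure `ω` and symmetric `f : X^n → ℝ`,
`⟨(ω)^{(n)}, f⟩ = Σ_{k=1}^{n} ⟨ω^{⊗k}, c(n,k)f⟩`, where `c(n,k)` is the unsigned Stirling
operator of the first kind. -/
theorem stirling_first_kind_expansion
    {X : Type*} [Fintype X] [DecidableEq X] {n : ℕ} (hn : 1 ≤ n)
    (ω : X → ℝ) (f : (Fin n → X) → ℝ) (hf : IsSymmFun f) :
    pairing n (fun y => (-1 : ℝ) ^ n * ff (-ω) n y) f
      = ∑ k ∈ Finset.Icc 1 n, pairing k (prodMeas ω k) (cop n k f) :=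
  stirling_first_kind_expansion_general hn ω f
end

section
/- Define the Lah operator L(n,k) on symmetric functions f : X^n → ℝ by L(n,k)f = Σ_{λ={λ₁,…,λ_k}∈UP(n,k)} |λ₁|!⋯|λ_k|! · D_λ f. Then L(n,k) = Σ_{i=k}^{n} S(i,k) ∘ c(n,i), where S and c are the Stirling operators of the second and (unsigned) first kind. -/
open Finset

/-! Both sides are regrouped as sums over the permutations `σ` of `Fin n`. On the left,
`∏ |G⁻¹ j|!` counts the `σ` preserving the fibres of `G`, i.e. whose cycle partition refines
`ker G`. On the right, `∏ (|g⁻¹ j| - 1)!` counts the `σ` whose cycles are exactly the fibres of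
`g`. For fixed `σ` with `c` cycles, the surjections `g` onto `Fin i` with kernel the cycle
partition exist only for `i = c` and number `c!`, which cancels the `1 / i!`, and `h ↦ h ∘ g`
identifies the surjections `Fin c → Fin k` with the surjections `G` constant on the cycles.
So both sides equal `∑ σ, ∑ G constant on the cycles of σ, f (y ∘ G)`. -/

open Function Equiv Perm
open scoped Nat

section Permutations

variable {α β : Type*}

theorem sameCycle_setoid_le_ker_iff [Finite α] {σ : Perm α} {p : α → β} :
    SameCycle.setoid σ ≤ Setoid.ker p ↔ p ∘ σ = p := by
  refine ⟨fun h => funext fun a => (h (SameCycle.refl σ a).apply_right).symm, fun h a b hab => ?_⟩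
  obtain ⟨i, rfl⟩ := hab.exists_nat_pow_eq
  rw [Setoid.ker_def, coe_pow, ← comp_apply (f := p), iterate_invariant h]

open Classical in
theorem card_isCycleOn_univ [Fintype α] [DecidableEq α] :
    #{σ : Perm α | σ.IsCycleOn Set.univ} = (Fintype.card α - 1)! := by
  rcases le_or_gt (Fintype.card α) 1 with h | h
  · have : Subsingleton α := Fintype.card_le_one_iff_subsingleton.mp h
    rw [filter_true_of_mem fun σ _ => isCycleOn_of_subsingleton σ _, card_univ, Fintype.card_perm]
    interval_cases Fintype.card α <;> rfl
  have hs : (Set.univ : Set α).Nontrivial :=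
    Set.nontrivial_univ_iff.mpr (Fintype.one_lt_card_iff_nontrivial.mp h)
  have key (σ : Perm α) : σ.IsCycleOn Set.univ ↔ σ.cycleType = {Fintype.card α} := by
    constructor
    · intro hσ
      have hsupp : σ.support = univ :=
        eq_univ_of_forall fun x => mem_support.mpr (hσ.apply_ne hs trivial)
      rw [(isCycle_iff_exists_isCycleOn.mpr ⟨_, hs, hσ, fun _ _ => trivial⟩).cycleType, hsupp,
        card_univ]
    · intro hσ
      have hcyc : σ.IsCycle := card_cycleType_eq_one.mp (by simp [hσ])
      have hsupp : σ.support = univ := eq_univ_of_card _ (by rw [← sum_cycleType, hσ]; simp)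
      convert hcyc.isCycleOn
      ext x
      simpa using (Finset.ext_iff.mp hsupp x).symm
  rw [filter_congr fun σ _ => key σ, card_of_cycleType_singleton h le_rfl, Nat.choose_self, mul_one]

def fiberPermEquiv (p : α → β) : {σ : Perm α // p ∘ σ = p} ≃ ∀ b, Perm {a // p a = b} :=
  ((subtypeEquiv DomMulAct.mk fun _ => Iff.rfl).trans MulOpposite.opEquiv).trans
    (DomMulAct.stabilizerMulEquiv p).toEquiv

theorem sameCycle_fiberPermEquiv_iff {p : α → β} {σ : {σ : Perm α // p ∘ σ = p}} {b : β}
    {u v : {a // p a = b}} : (fiberPermEquiv p σ b).SameCycle u v ↔ σ.1.SameCycle u v :=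
  sameCycle_subtypePerm (f := σ.1) (h := fun x => by rw [← comp_apply (f := p), σ.2])

theorem sameCycle_setoid_eq_ker_iff [Finite α] {p : α → β} {σ : Perm α} :
    SameCycle.setoid σ = Setoid.ker p ↔
      ∃ h : p ∘ σ = p, ∀ b, (fiberPermEquiv p ⟨σ, h⟩ b).IsCycleOn Set.univ := by
  rw [le_antisymm_iff, sameCycle_setoid_le_ker_iff]
  refine ⟨fun ⟨h, hker⟩ => ⟨h, fun b => ⟨Set.bijOn_univ.mpr (Equiv.bijective _), ?_⟩⟩, ?_⟩
  · rintro u - v -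
    exact sameCycle_fiberPermEquiv_iff.mpr (hker (u.2.trans v.2.symm))
  · rintro ⟨h, hcyc⟩
    refine ⟨h, fun a b (hab : p a = p b) => ?_⟩
    exact sameCycle_fiberPermEquiv_iff.mp
      ((hcyc (p b)).2 (x := ⟨a, hab⟩) trivial (y := ⟨b, rfl⟩) trivial)

open Classical in
theorem card_sameCycle_setoid_eq_ker [Fintype α] [DecidableEq α] [Fintype β] [DecidableEq β]
    (p : α → β) :
    #{σ : Perm α | SameCycle.setoid σ = Setoid.ker p} =
      ∏ b, (Fintype.card {a // p a = b} - 1)! := by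
  simp only [← card_isCycleOn_univ, ← Fintype.card_subtype, ← Fintype.card_pi]
  exact Fintype.card_congr <| (subtypeEquivRight fun _ => sameCycle_setoid_eq_ker_iff).trans <|
    (subtypeSubtypeEquivSubtypeExists _ _).symm.trans <|
      (subtypeEquiv (fiberPermEquiv p) fun _ => Iff.rfl).trans
        (subtypePiEquivPi (p := fun _ x => IsCycleOn x Set.univ))

open Classical in
theorem card_sameCycle_setoid_le_ker [Fintype α] [DecidableEq α] [Fintype β] [DecidableEq β]
    (p : α → β) :
    #{σ : Perm α | SameCycle.setoid σ ≤ Setoid.ker p} = ∏ b, (Fintype.card {a // p a = b})! := by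
  simp only [sameCycle_setoid_le_ker_iff]
  rw [← Fintype.card_subtype]
  exact DomMulAct.stabilizer_card p

end Permutations

section Surjections

variable {α β γ : Type*}

noncomputable def quotientEquivSurjectiveKer (s : Setoid α) :
    (Quotient s ≃ β) ≃ {g : α → β // Surjective g ∧ s = Setoid.ker g} where
  toFun e := ⟨e ∘ Quotient.mk s, e.surjective.comp Quotient.mk_surjective, by
    ext a b
    simp [Setoid.ker_def, Quotient.eq]⟩
  invFun g := (Quotient.congrRight fun a b => Setoid.ext_iff.mp g.2.2 a b).trans
    (Setoid.quotientKerEquivOfSurjective g.1 g.2.1)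
  left_inv e := by
    ext q
    induction q using Quotient.inductionOn
    rfl
  right_inv g := rfl

theorem natCard_equiv [Finite α] [Finite β] :
    Nat.card (α ≃ β) = if Nat.card α = Nat.card β then (Nat.card β)! else 0 := by
  split_ifs with h
  · obtain ⟨e⟩ := Finite.card_eq.mp h
    rw [Nat.card_congr (e.equivCongr (Equiv.refl β)), Nat.card_perm]
  · have : IsEmpty (α ≃ β) := ⟨fun e => h (Nat.card_congr e)⟩
    exact Nat.card_of_isEmpty

open Classical in
theorem card_surjective_ker_eq [Fintype α] [DecidableEq α] [Fintype β] [DecidableEq β]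
    (s : Setoid α) :
    #{g : α → β | Surjective g ∧ s = Setoid.ker g} =
      if Nat.card (Quotient s) = Fintype.card β then (Fintype.card β)! else 0 := by
  rw [← Fintype.card_subtype, ← Nat.card_eq_fintype_card,
    ← Nat.card_congr (quotientEquivSurjectiveKer s), natCard_equiv,
    Nat.card_eq_fintype_card (α := β)]

open Classical in
theorem sum_surjective_comp [Fintype α] [DecidableEq α] [Fintype β] [DecidableEq β] [Fintype γ]
    [DecidableEq γ] {M : Type*} [AddCommMonoid M] {g : α → γ} (hg : Surjective g)
    (F : (α → β) → M) :
    ∑ h : γ → β with Surjective h, F (h ∘ g) =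
      ∑ G : α → β with Surjective G ∧ Setoid.ker g ≤ Setoid.ker G, F G := by
  have hfactor {G : α → β} (hG : Setoid.ker g ≤ Setoid.ker G) : (G ∘ surjInv hg) ∘ g = G :=
    funext fun a => hG (surjInv_eq hg (g a))
  refine sum_nbij' (· ∘ g) (· ∘ surjInv hg) ?_ ?_ ?_ ?_ fun _ _ => rfl
  · simp only [mem_filter, mem_univ, true_and]
    exact fun h hh => ⟨hh.comp hg, fun a b hab => congrArg h hab⟩
  · simp only [mem_filter, mem_univ, true_and]
    rintro G ⟨hGs, hG⟩
    rw [← hfactor hG] at hGs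
    exact hGs.of_comp
  · exact fun h _ => funext fun c => congrArg h (surjInv_eq hg c)
  · exact fun G hG => hfactor (mem_filter.mp hG).2.2

end Surjections

theorem fiberCard_eq_card_subtype {n k : ℕ} (g : Fin n → Fin k) (j : Fin k) :
    fiberCard g j = Fintype.card {a // g a = j} :=
  (Fintype.card_subtype _).symm

open Classical in
theorem sum_Icc_sum_surjs_ker_eq {n k : ℕ} (s : Setoid (Fin n)) (F : (Fin n → Fin k) → ℝ) :
    ∑ i ∈ Icc k n, (∑ g ∈ surjs n i with s = Setoid.ker g, ∑ h ∈ surjs i k, F (h ∘ g)) / i ! =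
      ∑ G ∈ surjs n k with s ≤ Setoid.ker G, F G := by
  set A := ∑ G ∈ surjs n k with s ≤ Setoid.ker G, F G with hA
  have hinner (i : ℕ) :
      ∀ g ∈ {g ∈ surjs n i | s = Setoid.ker g}, ∑ h ∈ surjs i k, F (h ∘ g) = A := by
    intro g hg
    simp only [surjs, mem_filter, mem_univ, true_and] at hg
    obtain ⟨hgs, rfl⟩ := hg
    rw [surjs, sum_surjective_comp hgs, hA, surjs, filter_filter]
  have hterm (i : ℕ) :
      (∑ g ∈ surjs n i with s = Setoid.ker g, ∑ h ∈ surjs i k, F (h ∘ g)) / i ! =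
        if Nat.card (Quotient s) = i then A else 0 := by
    rw [sum_congr rfl (hinner i), sum_const, nsmul_eq_mul, surjs, filter_filter,
      card_surjective_ker_eq, Fintype.card_fin]
    split_ifs
    · field_simp
    · simp
  rw [sum_congr rfl fun i _ => hterm i, sum_ite_eq, ite_eq_left_iff]
  intro hc
  -- a surjection onto `Fin k` constant on the classes of `s` forces `k ≤ |Fin n / s| ≤ n`
  refine (sum_eq_zero fun G hG => absurd (mem_Icc.mpr ⟨?_, ?_⟩) hc).symm
  · simp only [surjs, mem_filter, mem_univ, true_and] at hG
    simpa using Nat.card_le_card_of_surjective (Quotient.lift G hG.2)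
      (Surjective.of_comp (g := Quotient.mk s) hG.1)
  · simpa using Nat.card_le_card_of_surjective _ (Quotient.mk_surjective (s := s))

open Classical in
theorem sum_prod_factorial_fiberCard_mul {n k : ℕ} (F : (Fin n → Fin k) → ℝ) :
    ∑ G ∈ surjs n k, (∏ j, ((fiberCard G j)! : ℝ)) * F G =
      ∑ σ : Perm (Fin n), ∑ G ∈ surjs n k with SameCycle.setoid σ ≤ Setoid.ker G, F G := by
  simp_rw [sum_filter]
  rw [sum_comm]
  refine sum_congr rfl fun G _ => ?_
  rw [← sum_filter, sum_const, nsmul_eq_mul, card_sameCycle_setoid_le_ker]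
  simp [fiberCard_eq_card_subtype]

open Classical in
theorem sum_sum_prod_factorial_fiberCard_sub_one_mul {n i k : ℕ} (F : (Fin n → Fin k) → ℝ) :
    ∑ h ∈ surjs i k, (∑ g ∈ surjs n i, (∏ j, ((fiberCard g j - 1)! : ℝ)) * F (h ∘ g)) / i ! =
      ∑ σ : Perm (Fin n),
        (∑ g ∈ surjs n i with SameCycle.setoid σ = Setoid.ker g, ∑ h ∈ surjs i k, F (h ∘ g)) /
          i ! := by
  simp_rw [← sum_div, sum_filter]
  rw [sum_comm (s := surjs i k), sum_comm (t := surjs n i)]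
  congr 1
  refine sum_congr rfl fun g _ => ?_
  rw [← mul_sum, ← sum_filter, sum_const, nsmul_eq_mul, card_sameCycle_setoid_eq_ker]
  simp [fiberCard_eq_card_subtype]

theorem lah_eq_sum_stirling_general
    {X : Type*} {n k : ℕ}
    (f : (Fin n → X) → ℝ) (y : Fin k → X) :
    Lop n k f y = ∑ i ∈ Finset.Icc k n, Sop i k (cop n i f) y := by
  classical
  simp only [Lop, Sop, cop]
  rw [← sum_div]
  congr 1
  calc ∑ G ∈ surjs n k, (∏ j, ((fiberCard G j)! : ℝ)) * f (y ∘ G)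
      = ∑ σ : Perm (Fin n), ∑ G ∈ surjs n k with SameCycle.setoid σ ≤ Setoid.ker G, f (y ∘ G) :=
        sum_prod_factorial_fiberCard_mul _
    _ = ∑ σ : Perm (Fin n), ∑ i ∈ Icc k n,
          (∑ g ∈ surjs n i with SameCycle.setoid σ = Setoid.ker g,
            ∑ h ∈ surjs i k, f (y ∘ h ∘ g)) / i ! :=
        sum_congr rfl fun σ _ => (sum_Icc_sum_surjs_ker_eq _ _).symm
    _ = _ := by
        rw [sum_comm]
        exact sum_congr rfl fun i _ =>
          (sum_sum_prod_factorial_fiberCard_sub_one_mul (fun G => f (y ∘ G))).symm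

/-- The Lah operator satisfies `L(n,k) = Σ_{i=k}^{n} S(i,k) ∘ c(n,i)`, where
`S` and `c` are the Stirling operators of the second and (unsigned) first kind. -/
theorem lah_eq_sum_stirling
    {X : Type*} [Fintype X] [DecidableEq X] {n k : ℕ} (hk : 1 ≤ k) (hkn : k ≤ n)
    (f : (Fin n → X) → ℝ) (hf : IsSymmFun f) (y : Fin k → X) :
    Lop n k f y = ∑ i ∈ Finset.Icc k n, Sop i k (cop n i f) y :=
  lah_eq_sum_stirling_general f y
end

section
/- (Euler's formula for Stirling operators.) For a finite set X, n ≥ 1, 1 ≤ k ≤ n, a symmetric function f : X^n → ℝ, and points x₁,…,x_k ∈ X, it holds that (S(n,k)f)(x₁,…,x_k) = ((−1)^k/k!) Σ_{η ⊆ [x₁,…,x_k]} (−1)^{|η|} ⟨η^{⊗n}, f⟩, where the sum is over all sub-multisets η of the multiset [x₁,…,x_k], |η| is the cardinality of η, and η is identified with the sum of Dirac measures at its elements. -/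
open Finset

/-!
Since `S(n,k)f` is `1/k!` times the sum of `f(x ∘ g)` over the surjections `g : [n] → [k]`,
the formula is inclusion–exclusion over the set of values a map `g` misses: a map misses every
value outside `A` exactly when it factors through `A`, and the maps `[n] → A` are the terms of
`⟨η_A^{⊗n}, f⟩` for the sub-multiset `η_A = [x_a | a ∈ A]`.
-/

section
variable {ι β : Type*} [Fintype ι] [DecidableEq ι] [Fintype β] [DecidableEq β]

theorem inclusion_exclusion_sum_surjective {G : Type*} [AddCommGroup G] (F : (ι → β) → G) :
    ∑ g with Function.Surjective g, F g
      = ∑ t : Finset β, (-1 : ℤ) ^ #t • ∑ g with ∀ i, g i ∉ t, F g := by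
  set missing : β → Finset (ι → β) := fun b => {g | ∀ i, g i ≠ b}
  have hsurj : (univ.inf fun b => (missing b)ᶜ) = univ.filter (Function.Surjective (f := ·)) := by
    ext g; simp [missing, Finset.mem_inf, Function.Surjective, eq_comm]
  have havoid (t : Finset β) : t.inf missing = univ.filter fun g : ι → β => ∀ i, g i ∉ t := by
    ext g
    simp only [missing, Finset.mem_inf, mem_filter, mem_univ, true_and]
    grind
  simpa [hsurj, havoid] using inclusion_exclusion_sum_inf_compl univ missing F

theorem neg_one_pow_card_eq_mul_neg_one_pow_card_compl {R : Type*} [CommRing R] (t : Finset β) :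
    (-1 : R) ^ #t = (-1) ^ Fintype.card β * (-1) ^ #tᶜ := by
  rw [← card_add_card_compl t, pow_add, mul_assoc, ← mul_pow, neg_one_mul, neg_neg, one_pow,
    mul_one]

theorem sum_surjective_eq_neg_one_pow_mul_alternating_sum {R : Type*} [CommRing R]
    (F : (ι → β) → R) :
    ∑ g with Function.Surjective g, F g
      = (-1) ^ Fintype.card β * ∑ A : Finset β, (-1) ^ #A * ∑ g with ∀ i, g i ∈ A, F g := by
  rw [inclusion_exclusion_sum_surjective, mul_sum]
  refine Fintype.sum_equiv (compl_involutive.toPerm _) _ _ fun t => ?_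
  simp [zsmul_eq_mul, neg_one_pow_card_eq_mul_neg_one_pow_card_compl t, mul_assoc]

theorem sum_fun_subtype_eq_sum_filter {M : Type*} [AddCommMonoid M] (A : Finset β)
    (F : (ι → β) → M) :
    ∑ j : ι → A, F (fun i => j i) = ∑ g with ∀ i, g i ∈ A, F g := by
  rw [sum_subtype _ (p := fun g : ι → β => ∀ i, g i ∈ A) (by simp)]
  exact Fintype.sum_equiv Equiv.subtypePiEquivPi.symm _ _ fun _ => rfl

end

theorem stirling_second_euler_formula_general
    {X : Type*} [Fintype X] [DecidableEq X] {n k : ℕ}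
    (f : (Fin n → X) → ℝ) (x : Fin k → X) :
    Sop n k f x
      = ((-1 : ℝ) ^ k / (k.factorial : ℝ)) *
          ∑ A : Finset (Fin k), (-1 : ℝ) ^ A.card *
            ∑ j : Fin n → {a // a ∈ A}, f (fun t => x (j t).1) := by
  have hsub (A : Finset (Fin k)) := sum_fun_subtype_eq_sum_filter A fun g => f (x ∘ g)
  simp only [Sop, surjs, Function.comp_def] at hsub ⊢
  rw [sum_surjective_eq_neg_one_pow_mul_alternating_sum, Fintype.card_fin]
  simp only [hsub]
  ring

/-- Euler's formula for Stirling operators: for `1 ≤ k ≤ n`, symmetric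
`f : X^n → ℝ` and points `x₁,…,x_k`,
`(S(n,k)f)(x₁,…,x_k) = ((−1)^k/k!) Σ_{η ⊆ [x₁,…,x_k]} (−1)^{|η|} ⟨η^{⊗n}, f⟩`,
the sum running over the `2^k` sub-multisets `η` of `[x₁,…,x_k]` indexed by the subsets
`A ⊆ {1,…,k}`, with `⟨η^{⊗n}, f⟩ = Σ_{j : {1,…,n} → A} f(x_{j(1)},…,x_{j(n)})`. -/
theorem stirling_second_euler_formula
    {X : Type*} [Fintype X] [DecidableEq X] {n k : ℕ} (hk : 1 ≤ k) (hkn : k ≤ n)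
    (f : (Fin n → X) → ℝ) (hf : IsSymmFun f) (x : Fin k → X) :
    Sop n k f x
      = ((-1 : ℝ) ^ k / (k.factorial : ℝ)) *
          ∑ A : Finset (Fin k), (-1 : ℝ) ^ A.card *
            ∑ j : Fin n → {a // a ∈ A}, f (fun t => x (j t).1) :=
  stirling_second_euler_formula_general f x
end
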